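/- arXiv:2206.01582 — 5 statements merged into one kernel-verified Lean document; each statement's English description precedes it below -/
import Mathlib

section
/- Let Γ and G be groups, and let H be a subgroup of the wreath product Γ ≀ G = Γ^G ⋊ G (where G acts on functions f : G → Γ by (f^h)(g) = f(hg)). Suppose the projection of H to G is all of G, and that for some g ∈ G with g ≠ 1, the subgroup H ∩ Γ^G surjects onto Γ × Γ under the map f ↦ (f(1), f(g)). Then for every subgroup N of Γ ≀ G containing the commutator subgroup [H, H], the intersection N ∩ Γ^G surjects onto Γ under the evaluation map f ↦ f(1). -/
/-!
Statement 0: Let Γ and G be groups, and let H ≤ Γ ≀ G = Γ^G ⋊ G (G acting on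
functions f : G → Γ by (f^h)(g) = f (h * g); as a left action, (h • f) g = f (h⁻¹ * g)).
If the projection of H to G is all of G, and for some g ≠ 1 the subgroup H ∩ Γ^G
surjects onto Γ × Γ under f ↦ (f 1, f g), then for every subgroup N containing the
commutator subgroup [H, H], the intersection N ∩ Γ^G surjects onto Γ under f ↦ f 1.
-/

/-- The action of `G` on `G → Γ` by right translation of the argument:
`(h • f) g = f (h⁻¹ * g)`, i.e. `f ^ h = h⁻¹ • f` where `(f ^ h) g = f (h * g)`. -/
def wreathAction (Γ G : Type*) [Group Γ] [Group G] : G →* MulAut (G → Γ) where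
  toFun h :=
    { toFun := fun f g => f (h⁻¹ * g)
      invFun := fun f g => f (h * g)
      left_inv := fun f => by funext g; simp [mul_assoc]
      right_inv := fun f => by funext g; simp [mul_assoc]
      map_mul' := fun f₁ f₂ => rfl }
  map_one' := by ext f g; simp
  map_mul' h₁ h₂ := by ext f g; simp [mul_assoc]

/-- The wreath product `Γ ≀ G`. -/
abbrev WreathProduct (Γ G : Type*) [Group Γ] [Group G] :=
  (G → Γ) ⋊[wreathAction Γ G] G

/-!
If `x ∈ H` projects to `g⁻¹` and `f ∈ H ∩ Γ^G` has `f 1 = γ`, `f g = 1`, then the commutator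
`⁅f, x⁆ ∈ [H, H]` lies in `Γ^G`, and its value at `1` is `f 1` times a conjugate of `(f g)⁻¹`,
that is, `γ`.
-/

namespace SemidirectProduct

variable {N G : Type*} [Group N] [Group G] {φ : G →* MulAut N}

open scoped commutatorElement

theorem commutatorElement_inl (n : N) (x : N ⋊[φ] G) :
    ⁅(inl n : N ⋊[φ] G), x⁆ = inl (n * x.left * φ x.right n⁻¹ * x.left⁻¹) := by
  ext <;> simp [commutatorElement_def, mul_assoc]

end SemidirectProduct

@[simp]
theorem wreathAction_symm_apply {Γ G : Type*} [Group Γ] [Group G] (h : G) (f : G → Γ) (g : G) :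
    (wreathAction Γ G h).symm f g = f (h * g) :=
  rfl

theorem stmt_0_general {Γ G : Type*} [Group Γ] [Group G]
    (H : Subgroup (WreathProduct Γ G))
    (hpr : ∀ g : G, ∃ x ∈ H, SemidirectProduct.rightHom x = g)
    (g : G)
    (hsurj : ∀ γ₁ γ₂ : Γ, ∃ f : G → Γ,
      SemidirectProduct.inl f ∈ H ∧ f 1 = γ₁ ∧ f g = γ₂)
    (N : Subgroup (WreathProduct Γ G)) (hN : ⁅H, H⁆ ≤ N) :
    ∀ γ : Γ, ∃ f : G → Γ, SemidirectProduct.inl f ∈ N ∧ f 1 = γ := by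
  intro γ
  obtain ⟨x, hxH, hx : x.right = g⁻¹⟩ := hpr g⁻¹
  obtain ⟨f, hfH, hf1, hfg⟩ := hsurj γ 1
  have hcomm := hN (Subgroup.commutator_mem_commutator hfH hxH)
  rw [SemidirectProduct.commutatorElement_inl] at hcomm
  refine ⟨_, hcomm, ?_⟩
  simp [hx, hf1, hfg]

theorem stmt_0 {Γ G : Type*} [Group Γ] [Group G]
    (H : Subgroup (WreathProduct Γ G))
    (hpr : ∀ g : G, ∃ x ∈ H, SemidirectProduct.rightHom x = g)
    (g : G) (hg : g ≠ 1)
    (hsurj : ∀ γ₁ γ₂ : Γ, ∃ f : G → Γ,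
      SemidirectProduct.inl f ∈ H ∧ f 1 = γ₁ ∧ f g = γ₂)
    (N : Subgroup (WreathProduct Γ G)) (hN : ⁅H, H⁆ ≤ N) :
    ∀ γ : Γ, ∃ f : G → Γ, SemidirectProduct.inl f ∈ N ∧ f 1 = γ :=
  stmt_0_general H hpr g hsurj N hN
end

section
/- Let G₁, G₂, Γ be groups with G₁ and G₂ nontrivial, and set G = G₁ × G₂. Suppose the canonical projection pr : Γ ≀ G → G factors as a composition of surjective group homomorphisms p : Γ ≀ G → H and r : H → G. Let H₁, H₂ be normal subgroups of H with r(H₁) = G₁ × {1}, r(H₂) = {1} × G₂, and such that H₁ and H₂ commute elementwise ([H₁, H₂] = 1). Then the kernel of p, which is contained in Γ^G, surjects onto Γ under the evaluation map f ↦ f(1). -/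
/-!
Pick `s = (g₁, 1)` and `t = (1, g₂)`, both nontrivial, and lifts `w₁, w₂` of them with
`p w₁ ∈ H₁`, `p w₂ ∈ H₂`. For any `a : Γ^G` the double commutator `⁅⁅a, w₁⁆, w₂⁆` is mapped
by `p` into `⁅H₁, H₂⁆ = 1`, because `H₁` is normal. Commutators of an element `a` of the base
with `w` stay in the base, and their value at `g` is `a g` up to a conjugate of `a (w⁻¹ g)`.
For `a` the function `γ` at `1` and `1` elsewhere, the value of `⁅⁅a, w₁⁆, w₂⁆` at `1` is
therefore `γ`: the correction terms only involve the values of `a` at `s⁻¹`, `t⁻¹` and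
`s⁻¹ t⁻¹`, which are all different from `1`.
-/

open scoped commutatorElement

namespace SemidirectProduct

variable {N G : Type*} [Group N] [Group G] {φ : G →* MulAut N}

theorem commutator_inl (n : N) (w : N ⋊[φ] G) :
    ⁅(inl n : N ⋊[φ] G), w⁆ = inl (n * w.left * φ w.right n⁻¹ * w.left⁻¹) := by
  ext <;> simp [commutatorElement_def]

theorem commutator_inl_eq_inl_left (n : N) (w : N ⋊[φ] G) :
    ⁅(inl n : N ⋊[φ] G), w⁆ = inl ⁅(inl n : N ⋊[φ] G), w⁆.left := by
  rw [commutator_inl, left_inl]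

theorem exists_map_mem_and_right_eq {H : Type*} [Group H]
    {p : N ⋊[φ] G →* H} (hp : Function.Surjective p) {r : H →* G}
    (hfactor : r.comp p = rightHom) {K : Subgroup H} {g : G} (hg : g ∈ K.map r) :
    ∃ w : N ⋊[φ] G, p w ∈ K ∧ w.right = g := by
  obtain ⟨h, hK, rfl⟩ := hg
  obtain ⟨w, rfl⟩ := hp h
  exact ⟨w, hK, (DFunLike.congr_fun hfactor w).symm⟩

end SemidirectProduct

namespace WreathProduct

open SemidirectProduct

variable {Γ G : Type*} [Group Γ] [Group G]

theorem commutator_inl_left_apply (n : G → Γ) (w : WreathProduct Γ G) (g : G) :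
    ⁅(inl n : WreathProduct Γ G), w⁆.left g =
      n g * w.left g * (n (w.right⁻¹ * g))⁻¹ * (w.left g)⁻¹ := by
  rw [commutator_inl]
  rfl

theorem commutator_inl_left_apply_of_eq_one {n : G → Γ} {w : WreathProduct Γ G} {g : G}
    (h : n (w.right⁻¹ * g) = 1) : ⁅(inl n : WreathProduct Γ G), w⁆.left g = n g := by
  rw [commutator_inl_left_apply, h]
  group

theorem commutator_inl_left_apply_eq_one {n : G → Γ} {w : WreathProduct Γ G} {g : G}
    (h : n g = 1) (h' : n (w.right⁻¹ * g) = 1) :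
    ⁅(inl n : WreathProduct Γ G), w⁆.left g = 1 := by
  rw [commutator_inl_left_apply_of_eq_one h', h]

end WreathProduct

theorem Subgroup.commutator_commutator_eq_one {H : Type*} [Group H] {H₁ H₂ : Subgroup H}
    [H₁.Normal] (hcomm : ⁅H₁, H₂⁆ = ⊥) (x : H) {h₁ h₂ : H} (hh₁ : h₁ ∈ H₁) (hh₂ : h₂ ∈ H₂) :
    ⁅⁅x, h₁⁆, h₂⁆ = 1 := by
  have hx : ⁅x, h₁⁆ ∈ H₁ := commutator_le_right ⊤ H₁ (commutator_mem_commutator trivial hh₁)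
  simpa [hcomm] using commutator_mem_commutator hx hh₂

open SemidirectProduct WreathProduct in
theorem stmt_1_general {Γ G₁ G₂ H : Type*} [Group Γ] [Group G₁] [Group G₂] [Group H]
    [Nontrivial G₁] [Nontrivial G₂]
    (p : WreathProduct Γ (G₁ × G₂) →* H) (hp : Function.Surjective p)
    (r : H →* G₁ × G₂)
    (hfactor : r.comp p = SemidirectProduct.rightHom)
    (H₁ H₂ : Subgroup H) (hH₁ : H₁.Normal)
    (hrH₁ : H₁.map r = (⊤ : Subgroup G₁).prod (⊥ : Subgroup G₂))
    (hrH₂ : H₂.map r = (⊥ : Subgroup G₁).prod (⊤ : Subgroup G₂))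
    (hcomm : ⁅H₁, H₂⁆ = (⊥ : Subgroup H)) :
    ∀ γ : Γ, ∃ f : G₁ × G₂ → Γ, SemidirectProduct.inl f ∈ p.ker ∧ f 1 = γ := by
  classical
  intro γ
  obtain ⟨g₁, hg₁⟩ := exists_ne (1 : G₁)
  obtain ⟨g₂, hg₂⟩ := exists_ne (1 : G₂)
  have hs₁ : ((g₁, 1) : G₁ × G₂) ∈ H₁.map r :=
    hrH₁ ▸ Subgroup.mem_prod.2 ⟨Subgroup.mem_top g₁, Subgroup.mem_bot.2 rfl⟩
  have ht₂ : ((1, g₂) : G₁ × G₂) ∈ H₂.map r :=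
    hrH₂ ▸ Subgroup.mem_prod.2 ⟨Subgroup.mem_bot.2 rfl, Subgroup.mem_top g₂⟩
  obtain ⟨w₁, hw₁, hs⟩ := exists_map_mem_and_right_eq hp hfactor hs₁
  obtain ⟨w₂, hw₂, ht⟩ := exists_map_mem_and_right_eq hp hfactor ht₂
  let a : G₁ × G₂ → Γ := Pi.mulSingle 1 γ
  have ha₁ : a 1 = γ := Pi.mulSingle_eq_same (M := fun _ => Γ) 1 γ
  have ha : ∀ g ≠ 1, a g = 1 := fun _ hg => Pi.mulSingle_eq_of_ne (M := fun _ => Γ) hg γ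
  let b := ⁅(inl a : WreathProduct Γ (G₁ × G₂)), w₁⁆.left
  refine ⟨⁅(inl b : WreathProduct Γ (G₁ × G₂)), w₂⁆.left, ?_, ?_⟩
  · rw [← commutator_inl_eq_inl_left, ← commutator_inl_eq_inl_left, MonoidHom.mem_ker,
      map_commutatorElement, map_commutatorElement]
    exact Subgroup.commutator_commutator_eq_one hcomm _ hw₁ hw₂
  · have hb : b (w₂.right⁻¹ * 1) = 1 :=
      commutator_inl_left_apply_eq_one (ha _ (by simp [ht, hg₂])) (ha _ (by simp [hs, ht, hg₁]))
    rw [commutator_inl_left_apply_of_eq_one hb]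
    exact (commutator_inl_left_apply_of_eq_one (ha _ (by simp [hs, hg₁]))).trans ha₁

theorem stmt_1 {Γ G₁ G₂ H : Type*} [Group Γ] [Group G₁] [Group G₂] [Group H]
    [Nontrivial G₁] [Nontrivial G₂]
    (p : WreathProduct Γ (G₁ × G₂) →* H) (hp : Function.Surjective p)
    (r : H →* G₁ × G₂) (hr : Function.Surjective r)
    (hfactor : r.comp p = SemidirectProduct.rightHom)
    (H₁ H₂ : Subgroup H) (hH₁ : H₁.Normal) (hH₂ : H₂.Normal)
    (hrH₁ : H₁.map r = (⊤ : Subgroup G₁).prod (⊥ : Subgroup G₂))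
    (hrH₂ : H₂.map r = (⊥ : Subgroup G₁).prod (⊤ : Subgroup G₂))
    (hcomm : ⁅H₁, H₂⁆ = (⊥ : Subgroup H)) :
    ∀ γ : Γ, ∃ f : G₁ × G₂ → Γ, SemidirectProduct.inl f ∈ p.ker ∧ f 1 = γ :=
  stmt_1_general p hp r hfactor H₁ H₂ hH₁ hrH₁ hrH₂ hcomm
end

section
/- Let K be a field and let M₁, …, M_r be Galois extensions of K (inside a fixed algebraic closure) such that for every i, M_i is not contained in the compositum M₁⋯M_{i−1}. Then there exists an element σ of the Galois group Gal(M₁⋯M_r/K) such that the restriction of σ to M_i is nontrivial for every i = 1, …, r. -/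
/-!
Work in `Gal(L/K)` with the fixing subgroups `Hᵢ = Fix(Mᵢ)`. By the Galois
correspondence, `Mᵢ ⊄ M₁⋯Mᵢ₋₁` means some `t` fixes `M₁, …, Mᵢ₋₁` but not `Mᵢ`.
Going up through the indices, an element `g` outside `H₁, …, Hᵢ₋₁` can be corrected
to lie outside `Hᵢ` too: if `g ∈ Hᵢ`, replace it by `g * t`, which stays outside
each `Hⱼ` (`j < i`) because `t ∈ Hⱼ`, and leaves `Hᵢ` because `t ∉ Hᵢ`. Finally
restrict `g` to the compositum, which is normal over `K`.
-/

theorem Subgroup.exists_forall_notMem_of_triangular {G ι : Type*} [Group G] [LinearOrder ι]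
    (H : ι → Subgroup G) (hH : ∀ i, ∃ t ∉ H i, ∀ j < i, t ∈ H j) (s : Finset ι) :
    ∃ g : G, ∀ i ∈ s, g ∉ H i := by
  classical
  induction s using Finset.induction_on_max with
  | empty => exact ⟨1, by simp⟩
  | insert a s hlt ih =>
    obtain ⟨g, hg⟩ := ih
    by_cases hga : g ∈ H a
    · obtain ⟨t, hta, ht⟩ := hH a
      refine ⟨g * t, Finset.forall_mem_insert _ _ _ |>.mpr ⟨?_, fun j hj => ?_⟩⟩
      · exact fun hgt => hta <| by simpa using (H a).mul_mem ((H a).inv_mem hga) hgt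
      · exact fun hgt => hg j hj <| by
          simpa using (H j).mul_mem hgt ((H j).inv_mem (ht j (hlt j hj)))
    · exact ⟨g, Finset.forall_mem_insert _ _ _ |>.mpr ⟨hga, hg⟩⟩

namespace IntermediateField

variable {K L : Type*} [Field K] [Field L] [Algebra K L]

theorem fixingSubgroup_le_fixingSubgroup_iff [IsGalois K L] {E N : IntermediateField K L} :
    N.fixingSubgroup ≤ E.fixingSubgroup ↔ E ≤ N := by
  rw [← le_iff_le, InfiniteGalois.fixedField_fixingSubgroup]

theorem exists_mem_restrictNormal_ne_of_notMem_fixingSubgroup {E F : IntermediateField K L}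
    [Normal K E] (hFE : F ≤ E) {σ : L ≃ₐ[K] L} (hσ : σ ∉ F.fixingSubgroup) :
    ∃ x : E, (x : L) ∈ F ∧ σ.restrictNormal E x ≠ x := by
  obtain ⟨x, hxF, hσx⟩ : ∃ x ∈ F, σ x ≠ x := by simpa using hσ
  refine ⟨⟨x, hFE hxF⟩, hxF, fun h => hσx ?_⟩
  simpa [h] using (σ.restrictNormal_commutes E ⟨x, hFE hxF⟩).symm

end IntermediateField

open IntermediateField in
theorem stmt_2 {K L : Type*} [Field K] [Field L] [Algebra K L] [IsGalois K L]
    (r : ℕ) (M : Fin r → IntermediateField K L)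
    (hGal : ∀ i, IsGalois K (M i))
    (hnotle : ∀ i, ¬ M i ≤ ⨆ j : Fin r, ⨆ _ : j < i, M j) :
    ∃ σ : (⨆ i, M i : IntermediateField K L) ≃ₐ[K] (⨆ i, M i : IntermediateField K L),
      ∀ i, ∃ x : (⨆ i, M i : IntermediateField K L), (x : L) ∈ M i ∧ σ x ≠ x := by
  have htri : ∀ i, ∃ t ∉ (M i).fixingSubgroup, ∀ j < i, t ∈ (M j).fixingSubgroup := by
    intro i
    obtain ⟨t, htN, htM⟩ := SetLike.not_le_iff_exists.mp <|
      fixingSubgroup_le_fixingSubgroup_iff.not.mpr (hnotle i)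
    exact ⟨t, htM, fun j hj => fixingSubgroup_antitone
      (le_iSup₂ (f := fun j (_ : j < i) => M j) j hj) htN⟩
  obtain ⟨σ, hσ⟩ := Subgroup.exists_forall_notMem_of_triangular _ htri Finset.univ
  exact ⟨σ.restrictNormal _, fun i => exists_mem_restrictNormal_ne_of_notMem_fixingSubgroup
    (le_iSup M i) (hσ i (Finset.mem_univ i))⟩
end

section
/- Let K be a field of characteristic zero, A an abelian variety over K, and x a point of A over an algebraic closure of K. Then there exists a positive integer m such that K(n·m·x) = K(m·x) for every positive integer n. -/
/-!
Statement 3: Let K be a field of characteristic zero, A an abelian variety over K, and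
x ∈ A(K̄). Then there exists m > 0 with K(n·m·x) = K(m·x) for all n > 0.

Modelling: Mathlib has no abelian varieties. We model the group of points A(K̄) of an
abelian variety over K as an additive commutative group `A` equipped with an action of
the absolute Galois group Gal(K̄/K) = (L ≃ₐ[K] L) by additive automorphisms (here L is
an algebraic closure of K). The residue field K(y) of a point y ∈ A(K̄) is the fixed
field of its stabilizer in the Galois group; that it is a finite extension of K is
recorded as a hypothesis (automatic for actual points of a variety).
-/

theorem stmt_3 {K L : Type*} [Field K] [CharZero K] [Field L] [Algebra K L]
    [IsAlgClosure K L]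
    {A : Type*} [AddCommGroup A] [DistribMulAction (L ≃ₐ[K] L) A]
    (x : A)
    (hfin : FiniteDimensional K
      (IntermediateField.fixedField (MulAction.stabilizer (L ≃ₐ[K] L) x))) :
    ∃ m : ℕ, 0 < m ∧ ∀ n : ℕ, 0 < n →
      IntermediateField.fixedField (MulAction.stabilizer (L ≃ₐ[K] L) ((n * m) • x)) =
        IntermediateField.fixedField (MulAction.stabilizer (L ≃ₐ[K] L) (m • x)) := by
  set F : ℕ → IntermediateField K L :=
    fun m => IntermediateField.fixedField (MulAction.stabilizer (L ≃ₐ[K] L) (m • x)) with hF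
  -- stabilizer is monotone in the multiple
  have hstab : ∀ m n : ℕ, MulAction.stabilizer (L ≃ₐ[K] L) (m • x) ≤
      MulAction.stabilizer (L ≃ₐ[K] L) ((n * m) • x) := by
    intro m n σ hσ
    have hσ' : σ • (m • x) = m • x := hσ
    have : σ • ((n * m) • x) = (n * m) • x := by
      rw [mul_smul, smul_comm σ n (m • x), hσ']
    exact this
  have hle : ∀ m n : ℕ, F (n * m) ≤ F m := fun m n y hy σ => hy ⟨σ, hstab m n σ.2⟩
  have hle1 : ∀ m : ℕ, F m ≤ F 1 := by
    intro m
    have := hle 1 m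
    rwa [mul_one] at this
  have hF1 : FiniteDimensional K (F 1) := by
    rw [hF]
    simp only []
    beta_reduce
    rw [one_smul]
    exact hfin
  have hfd : ∀ m : ℕ, FiniteDimensional K (F m) := fun m =>
    FiniteDimensional.of_injective (IntermediateField.inclusion (hle1 m)).toLinearMap
      (IntermediateField.inclusion (hle1 m)).injective
  -- choose m ≥ 1 minimizing the finrank
  set S : Set ℕ := {d | ∃ m : ℕ, d = Module.finrank K (F (m + 1))} with hS
  have hSne : S.Nonempty := ⟨Module.finrank K (F 1), 0, by norm_num⟩
  obtain ⟨m₀, hm₀⟩ := Nat.sInf_mem hSne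
  refine ⟨m₀ + 1, Nat.succ_pos _, fun n hn => ?_⟩
  have h1 : F (n * (m₀ + 1)) ≤ F (m₀ + 1) := hle _ n
  have h2 : Module.finrank K (F (n * (m₀ + 1))) ∈ S := by
    refine ⟨n * (m₀ + 1) - 1, ?_⟩
    have hpos : 1 ≤ n * (m₀ + 1) := Nat.mul_pos hn (Nat.succ_pos _)
    rw [Nat.sub_add_cancel hpos]
  have h3 : Module.finrank K (F (m₀ + 1)) ≤ Module.finrank K (F (n * (m₀ + 1))) := by
    rw [← hm₀]
    exact Nat.sInf_le h2
  have := hfd (m₀ + 1)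
  exact IntermediateField.eq_of_le_of_finrank_le h1 h3
end

section
/- For every polynomial f with integer coefficients which is not a square in ℂ[X], there exists a finite set P_f of prime numbers such that: for every finite set P of primes, there are infinitely many integers x with (a) p does not divide f(x) for every prime p in P \ P_f, and (b) the p-adic valuation v_p(f(x)) is odd for some prime p not in P. -/
open Polynomial
open scoped Nat

/-!
Over `ℚ` write `f = s² h` with `h` squarefree; `h` is not constant since `f` is not a square
over `ℂ`. Clearing denominators gives `A f = s² h` in `ℤ[X]`, and the resultant of `h` and `h'`
is a nonzero integer `N` in the ideal `(h, h')`. By Schur's theorem infinitely many primes `q`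
divide a value `h(a)`; if moreover `q ∤ N` then `q ∤ h'(a)`, so `q` divides `h` exactly once
at `a` or at `a + q`. Let `P_f` be the primes dividing a nonzero value `f(n₀)`. Given `P`, choose
such a `q` outside `P` with `q ∤ A`: every `x ≡ n₀` modulo the primes of `P \ P_f` with `x`
congruent to the exact point modulo `q²` satisfies (a), and `v_q(f(x)) = 2 v_q(s(x)) + 1` for (b).
-/

theorem exists_sq_mul_squarefree {R : Type*} [CommMonoidWithZero R] [WfDvdMonoid R]
    {x : R} (hx : x ≠ 0) : ∃ a b : R, Squarefree b ∧ x = a ^ 2 * b := by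
  induction x using (wellFounded_dvdNotUnit (α := R)).induction with
  | _ x ih =>
  by_cases hsq : Squarefree x
  · exact ⟨1, x, hsq, by rw [one_pow, one_mul]⟩
  obtain ⟨y, ⟨z, rfl⟩, hy⟩ := by simpa [Squarefree] using hsq
  have hz : z ≠ 0 := right_ne_zero_of_mul hx
  obtain ⟨a, b, hb, rfl⟩ := ih z ⟨hz, y * y, fun h => hy (isUnit_of_mul_isUnit_left h),
    mul_comm _ _⟩ hz
  exact ⟨y * a, b, hb, by rw [mul_pow, sq y]; ac_rfl⟩

theorem Polynomial.exists_eval_ne_zero {R : Type*} [CommRing R] [IsDomain R] [Infinite R]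
    {f : R[X]} (hf : f ≠ 0) : ∃ x, f.eval x ≠ 0 :=
  f.exists_eval_ne_zero_of_natDegree_lt_card hf
    ((Cardinal.natCast_lt_aleph0).trans_le (Cardinal.aleph0_le_mk R))

theorem Polynomial.dvd_eval_iff_of_dvd_sub {R : Type*} [CommRing R] (g : R[X]) {d x y : R}
    (h : d ∣ x - y) : d ∣ g.eval x ↔ d ∣ g.eval y :=
  dvd_iff_dvd_of_dvd_sub (h.trans (sub_dvd_eval_sub x y g))

theorem Polynomial.exists_dvd_eval_not_sq_dvd {R : Type*} [CommRing R] [IsDomain R]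
    (g : R[X]) {q a : R} (hq : q ≠ 0) (ha : q ∣ g.eval a)
    (hd : ¬ q ∣ (derivative g).eval a) : ∃ b, q ∣ g.eval b ∧ ¬ q ^ 2 ∣ g.eval b := by
  by_cases ha2 : q ^ 2 ∣ g.eval a
  · obtain ⟨k, hk⟩ := g.binomExpansion a q
    refine ⟨a + q, ?_, fun h => hd ?_⟩
    · rw [hk]
      exact dvd_add (dvd_add ha (dvd_mul_left _ _)) ((dvd_pow_self q two_ne_zero).mul_left k)
    · -- g(a + q) ≡ g(a) + g'(a) q mod q², so q² ∣ g'(a) q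
      have h2 : q * q ∣ (derivative g).eval a * q := by
        rw [← sq, show (derivative g).eval a * q = g.eval (a + q) - g.eval a - k * q ^ 2 by
          rw [hk]; ring]
        exact dvd_sub (dvd_sub h ha2) (dvd_mul_left _ _)
      exact (mul_dvd_mul_iff_right hq).mp h2
  · exact ⟨a, ha, ha2⟩

theorem Polynomial.exists_mul_add_derivative_mul_eq_C {R K : Type*} [CommRing R] [Field K]
    {i : R →+* K} (hi : Function.Injective i) {h : R[X]} (hdeg : 0 < h.natDegree)
    (hsep : (h.map i).Separable) :
    ∃ N : R, N ≠ 0 ∧ ∃ U V : R[X], h * U + derivative h * V = C N := by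
  obtain ⟨U, V, -, -, hUV⟩ :=
    exists_mul_add_mul_eq_C_resultant h (derivative h) le_rfl le_rfl (.inl hdeg.ne')
  refine ⟨_, fun hN => resultant_ne_zero _ _ hsep ?_, U, V, hUV⟩
  rw [derivative_map, natDegree_map_eq_of_injective hi,
    natDegree_map_eq_of_injective hi, resultant_map_map, hN, map_zero]

theorem Polynomial.infinite_setOf_prime_dvd_eval (g : ℤ[X]) (hg : 0 < g.natDegree) :
    {q : ℕ | q.Prime ∧ ∃ a : ℤ, (q : ℤ) ∣ g.eval a}.Infinite := by
  obtain ⟨x₀, hc⟩ := exists_eval_ne_zero (ne_zero_of_natDegree_gt hg)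
  set c := g.eval x₀
  refine Set.infinite_of_forall_exists_gt fun n => ?_
  -- along `x₀ + c n! y` the values of `g` are `c` times a number `≡ 1 [ZMOD n!]`
  set G := g.comp (C (c * n !) * X + C x₀)
  have hG : 0 < G.natDegree := by
    rwa [natDegree_comp, natDegree_add_C, natDegree_C_mul_X _ (by positivity), mul_one]
  have hne : (G - C c) * (G + C c) ≠ 0 := mul_ne_zero
    (ne_zero_of_natDegree_gt (n := 0) (by rwa [natDegree_sub_C]))
    (ne_zero_of_natDegree_gt (n := 0) (by rwa [natDegree_add_C]))
  obtain ⟨y, hy⟩ := exists_eval_ne_zero hne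
  rw [eval_mul, eval_sub, eval_add, eval_C, mul_ne_zero_iff, sub_ne_zero] at hy
  obtain ⟨t, ht⟩ : c * n ! * y ∣ G.eval y - c := by
    simpa [G] using sub_dvd_eval_sub (c * n ! * y + x₀) x₀ g
  set k := 1 + n ! * y * t
  have hGk : G.eval y = c * k := by linear_combination ht
  have hk : k.natAbs ≠ 1 := by
    intro h
    rcases Int.natAbs_eq_iff.mp h with h | h
    · exact hy.1 (by rw [hGk, h]; push_cast; ring)
    · exact hy.2 (by rw [hGk, h]; push_cast; ring)
  obtain ⟨p, hp, hpk⟩ := Int.exists_prime_and_dvd hk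
  have hq : p.natAbs.Prime := Int.prime_iff_natAbs_prime.mp hp
  have hqk : (p.natAbs : ℤ) ∣ k := Int.natAbs_dvd.mpr hpk
  refine ⟨p.natAbs, ⟨hq, c * n ! * y + x₀, ?_⟩, ?_⟩
  · have : G.eval y = g.eval (c * n ! * y + x₀) := by simp [G]
    rw [← this, hGk]
    exact hqk.mul_left c
  · by_contra! hle
    have hfac : (p.natAbs : ℤ) ∣ n ! * y * t :=
      ((Int.natCast_dvd_natCast.mpr ((hq.dvd_factorial).mpr hle)).mul_right y).mul_right t
    have h1 : (p.natAbs : ℤ) ∣ 1 := by simpa [k] using (dvd_sub hqk hfac)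
    exact hq.not_dvd_one (by exact_mod_cast h1)

theorem Int.natCast_dvd_iff_mem_primeFactors {p : ℕ} (hp : p.Prime) {n : ℤ} (hn : n ≠ 0) :
    (p : ℤ) ∣ n ↔ p ∈ n.natAbs.primeFactors := by
  rw [Nat.mem_primeFactors_of_ne_zero (Int.natAbs_ne_zero.mpr hn), Int.natCast_dvd,
    and_iff_right hp]

theorem Polynomial.infinite_setOf_prime_dvd_eval_not_sq_dvd (h : ℤ[X]) (hdeg : 0 < h.natDegree)
    (hsep : (h.map (Int.castRingHom ℚ)).Separable) :
    {q : ℕ | q.Prime ∧ ∃ b : ℤ, (q : ℤ) ∣ h.eval b ∧ ¬ (q : ℤ) ^ 2 ∣ h.eval b}.Infinite := by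
  obtain ⟨N, hN, U, V, hUV⟩ :=
    exists_mul_add_derivative_mul_eq_C (Int.castRingHom ℚ).injective_int hdeg hsep
  refine ((infinite_setOf_prime_dvd_eval h hdeg).sdiff
    N.natAbs.primeFactors.finite_toSet).mono ?_
  rintro q ⟨⟨hq, a, ha⟩, hqN⟩
  rw [Finset.mem_coe, ← Int.natCast_dvd_iff_mem_primeFactors hq hN] at hqN
  have hder : ¬ (q : ℤ) ∣ (derivative h).eval a := fun hd => hqN <| by
    have hUVa := congrArg (eval a) hUV
    rw [eval_add, eval_mul, eval_mul, eval_C] at hUVa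
    exact hUVa ▸ dvd_add (ha.mul_right _) (hd.mul_right _)
  exact ⟨hq, h.exists_dvd_eval_not_sq_dvd (by exact_mod_cast hq.ne_zero) ha hder⟩

theorem Polynomial.exists_map_eq_C_mul (p : ℚ[X]) :
    ∃ (a : ℤ) (P : ℤ[X]), a ≠ 0 ∧ P.map (Int.castRingHom ℚ) = C (a : ℚ) * p := by
  obtain ⟨a, ha0, ha⟩ := IsLocalization.integerNormalization_spec (nonZeroDivisors ℤ) p
  exact ⟨a, _, nonZeroDivisors.ne_zero ha0, by
    rw [← algebraMap_int_eq, ha, zsmul_eq_mul, C_eq_intCast]⟩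

theorem Polynomial.exists_C_mul_eq_sq_mul (f : ℤ[X])
    (hf : ¬ ∃ g : ℂ[X], f.map (Int.castRingHom ℂ) = g ^ 2) :
    ∃ (A : ℤ) (s h : ℤ[X]), A ≠ 0 ∧ s ≠ 0 ∧ 0 < h.natDegree ∧
      (h.map (Int.castRingHom ℚ)).Separable ∧ C A * f = s ^ 2 * h := by
  have hf0 : f ≠ 0 := by rintro rfl; exact hf ⟨0, by simp⟩
  have hinj := (Int.castRingHom ℚ).injective_int
  obtain ⟨s, h, hh, hsh⟩ := exists_sq_mul_squarefree ((Polynomial.map_ne_zero_iff hinj).mpr hf0)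
  have hs0 : s ≠ 0 := by
    rintro rfl
    rw [zero_pow two_ne_zero, zero_mul, Polynomial.map_eq_zero_iff hinj] at hsh
    exact hf0 hsh
  have hdeg : 0 < h.natDegree := by
    refine Nat.pos_of_ne_zero fun h0 => hf ?_
    obtain ⟨w, hw⟩ := IsAlgClosed.exists_pow_nat_eq (algebraMap ℚ ℂ (h.coeff 0)) two_pos
    refine ⟨s.map (algebraMap ℚ ℂ) * C w, ?_⟩
    rw [show Int.castRingHom ℂ = (algebraMap ℚ ℂ).comp (Int.castRingHom ℚ) from
      RingHom.ext_int _ _, ← map_map, hsh, eq_C_of_natDegree_eq_zero h0]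
    simp [mul_pow, ← C_pow, hw]
  obtain ⟨a, h₀, ha, hh₀⟩ := exists_map_eq_C_mul h
  obtain ⟨b, s₀, hb, hs₀⟩ := exists_map_eq_C_mul s
  have haQ : (a : ℚ) ≠ 0 := by exact_mod_cast ha
  refine ⟨b ^ 2 * a, s₀, h₀, mul_ne_zero (pow_ne_zero 2 hb) ha, ?_, ?_, ?_, ?_⟩
  · rintro rfl
    rw [Polynomial.map_zero] at hs₀
    exact mul_ne_zero (C_ne_zero.mpr (Int.cast_ne_zero.mpr hb)) hs0 hs₀.symm
  · rwa [← natDegree_map_eq_of_injective hinj, hh₀, natDegree_C_mul haQ]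
  · rw [hh₀]
    exact (PerfectField.separable_iff_squarefree.mpr hh).unit_mul (isUnit_C.mpr haQ.isUnit)
  · apply map_injective _ hinj
    simp only [Polynomial.map_mul, Polynomial.map_pow, map_C, hh₀, hs₀, hsh]
    simp only [eq_intCast, Int.cast_mul, Int.cast_pow, C_mul, C_pow]
    ring

theorem Int.infinite_setOf_dvd_sub_and_dvd_sub {m n : ℤ} (hmn : IsCoprime m n) (hm : m ≠ 0)
    (hn : n ≠ 0) (a b : ℤ) : {x : ℤ | m ∣ x - a ∧ n ∣ x - b}.Infinite := by
  obtain ⟨u, v, huv⟩ := hmn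
  refine Set.infinite_of_injective_forall_mem (f := fun k => a * v * n + b * u * m + k * (m * n))
    (fun k l hkl => mul_right_cancel₀ (mul_ne_zero hm hn) (add_left_cancel hkl)) fun k => ?_
  constructor
  · exact ⟨(b - a) * u + k * n, by linear_combination a * huv⟩
  · exact ⟨(a - b) * v + k * m, by linear_combination b * huv⟩

theorem Int.isCoprime_prod_primes_pow {T : Finset ℕ} (hT : ∀ p ∈ T, p.Prime) {q : ℕ}
    (hq : q.Prime) (hqT : q ∉ T) (k : ℕ) : IsCoprime (∏ p ∈ T, (p : ℤ)) ((q : ℤ) ^ k) :=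
  IsCoprime.prod_left fun p hp => (Nat.isCoprime_iff_coprime.mpr
    ((Nat.coprime_primes (hT p hp) hq).mpr fun hpq => hqT (hpq ▸ hp))).pow_right

theorem odd_padicValInt_of_mul_eq_sq_mul {q : ℕ} [Fact q.Prime] {a m s n : ℤ}
    (h : a * m = s ^ 2 * n) (ha : ¬ (q : ℤ) ∣ a) (hs : s ≠ 0) (hn : (q : ℤ) ∣ n)
    (hn2 : ¬ (q : ℤ) ^ 2 ∣ n) : Odd (padicValInt q m) := by
  have hn0 : n ≠ 0 := by rintro rfl; exact hn2 (dvd_zero _)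
  have ha0 : a ≠ 0 := by rintro rfl; exact ha (dvd_zero _)
  have hm0 : m ≠ 0 := by rintro rfl; simp [hs, hn0] at h
  have hval : padicValInt q n = 1 := by
    have h1 := (padicValInt_dvd_iff 1 n).mp (by simpa using hn)
    have h2 := (padicValInt_dvd_iff 2 n).not.mp hn2
    omega
  have hv := congrArg (padicValInt q) h
  rw [padicValInt.mul ha0 hm0, padicValInt.eq_zero_of_not_dvd ha,
    padicValInt.mul (pow_ne_zero 2 hs) hn0, hval, sq, padicValInt.mul hs hs] at hv
  exact ⟨padicValInt q s, by omega⟩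

theorem stmt_5 (f : Polynomial ℤ)
    (hf : ¬ ∃ g : Polynomial ℂ, f.map (Int.castRingHom ℂ) = g ^ 2) :
    ∃ Pf : Finset ℕ, (∀ p ∈ Pf, p.Prime) ∧
      ∀ P : Finset ℕ, (∀ p ∈ P, p.Prime) →
        {x : ℤ | (∀ p ∈ P, p ∉ Pf → ¬ ((p : ℤ) ∣ f.eval x)) ∧
            ∃ p : ℕ, p.Prime ∧ p ∉ P ∧ Odd (padicValInt p (f.eval x))}.Infinite := by
  obtain ⟨A, s, h, hA, hs, hdeg, hsep, hfac⟩ := exists_C_mul_eq_sq_mul f hf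
  have hf0 : f ≠ 0 := right_ne_zero_of_mul <|
    hfac ▸ mul_ne_zero (pow_ne_zero 2 hs) (ne_zero_of_natDegree_gt hdeg)
  obtain ⟨n₀, hn₀⟩ := exists_eval_ne_zero hf0
  set Pf := (f.eval n₀).natAbs.primeFactors
  refine ⟨Pf, fun p hp => Nat.prime_of_mem_primeFactors hp, fun P hP => ?_⟩
  obtain ⟨q, ⟨hq, b, hqb, hqb2⟩, hqS⟩ := (infinite_setOf_prime_dvd_eval_not_sq_dvd h hdeg
    hsep).exists_notMem_finset (P ∪ A.natAbs.primeFactors)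
  have := Fact.mk hq
  rw [Finset.mem_union, not_or, ← Int.natCast_dvd_iff_mem_primeFactors hq hA] at hqS
  have hT : ∀ p ∈ P \ Pf, p.Prime := fun p hp => hP p (Finset.mem_sdiff.mp hp).1
  have hM : ∏ p ∈ P \ Pf, (p : ℤ) ≠ 0 :=
    Finset.prod_ne_zero_iff.mpr fun p hp => Int.natCast_ne_zero.mpr (hT p hp).ne_zero
  have hcop := Int.isCoprime_prod_primes_pow hT hq (fun h => hqS.1 (Finset.mem_sdiff.mp h).1) 2
  refine ((Int.infinite_setOf_dvd_sub_and_dvd_sub hcop hM (pow_ne_zero 2 (by exact_mod_cast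
    hq.ne_zero)) n₀ b).sdiff (finite_setOfPred_isRoot hs)).mono ?_
  rintro x ⟨⟨hxM, hxq⟩, hsx⟩
  refine ⟨fun p hp hpf hpx => hpf ?_, q, hq, hqS.1, ?_⟩
  · have hpM := (Finset.dvd_prod_of_mem _ (Finset.mem_sdiff.mpr ⟨hp, hpf⟩)).trans hxM
    exact (Int.natCast_dvd_iff_mem_primeFactors (hP p hp) hn₀).mp
      ((f.dvd_eval_iff_of_dvd_sub hpM).mp hpx)
  · have hqx := (h.dvd_eval_iff_of_dvd_sub ((dvd_pow_self _ two_ne_zero).trans hxq)).mpr hqb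
    have hqx2 := (h.dvd_eval_iff_of_dvd_sub hxq).not.mpr hqb2
    exact odd_padicValInt_of_mul_eq_sq_mul (by simpa using congrArg (eval x) hfac) hqS.2 hsx hqx
      hqx2
end
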